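/- (Identification of the cross-world mean, discrete case.) Let Z ∈ {0,1}, U = (D1,D0) with D1 ≥ D0 binary, M, X, Y discrete/integrable. Assume: (i) consistency D = Z D1 + (1−Z) D0, M = M_{Z D_Z}, Y = Y_{Z D_Z M}; (ii) (D_z, M_{z'd'}, Y_{z*d'm*}) ⊥ Z | X for all indices; (iii) (M_{zd}, Y_{z'dm'}) ⊥ U | X; (iv) M_{zd} ⊥ Y_{z'd'm'} | (Z, U, X); (v) positivity of all conditioning events. Then for any z, z' and any stratum u = (d1,d0) with P(U=u) > 0, E[Y_{z M_{z'}} | U = u] = Σ_x (P(U=u | X=x)/P(U=u)) · Σ_m E[Y | Z=z, D=d_z, M=m, X=x] · P(M=m | Z=z', D=d_{z'}, X=x) · P(X=x), where d_z = d1 if z=1 and d0 if z=0. -/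

import Mathlib

/-!
Fix a covariate value `x` and a mediator value `m`. Under monotonicity every principal stratum
`U = (D1, D0)` is, up to a null set, a Boolean combination of the events `{D1 = d}` and
`{D0 = d}`, so ignorability of the treatment for each `(D_t, M, Y)` separately extends to
`(U, M, Y) ⊥ Z | X`. Weak union and contraction combine this with principal and mediator
ignorability into `Y_{zam} ⊥ (M_{z'd'}, Z, U) | X` and `M_{z'b} ⊥ (Z, D_{z'}) | X`. The first
turns the observed regression `E[Y | Z = z, D = a, M = m, X = x]` into `E[Y_{zam} | X = x]` and
factors `E[Y_{zam}; M_{z'b} = m, U = u, X = x]` as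
`E[Y_{zam} | X = x] P(M_{z'b} = m | X = x) P(U = u, X = x)`; the second turns
`P(M = m | Z = z', D = b, X = x)` into `P(M_{z'b} = m | X = x)`. Summing over `m` and `x` gives
the theorem.
-/

open Finset Classical

/-- Probability of an event under a pmf on a finite sample space. -/
noncomputable def Pr {Ω : Type*} [Fintype Ω] (p : Ω → ℝ) (A : Ω → Prop) : ℝ :=
  ∑ ω, if A ω then p ω else 0

/-- Expectation under a pmf on a finite sample space. -/
noncomputable def Ex {Ω : Type*} [Fintype Ω] (p : Ω → ℝ) (f : Ω → ℝ) : ℝ :=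
  ∑ ω, p ω * f ω

section Pr

variable {Ω : Type*} [Fintype Ω]

theorem Pr_congr {w : Ω → ℝ} {A B : Ω → Prop} (h : ∀ ω, A ω ↔ B ω) :
    Pr w A = Pr w B :=
  congrArg (Pr w) (funext fun ω => propext (h ω))

theorem Pr_congr_ae {w : Ω → ℝ} {A B : Ω → Prop} (h : ∀ ω, w ω ≠ 0 → (A ω ↔ B ω)) :
    Pr w A = Pr w B :=
  sum_congr rfl fun ω _ => by
    by_cases hω : w ω = 0
    · simp [hω]
    · exact if_congr (h ω hω) rfl rfl

theorem Pr_congr_weight {w w' : Ω → ℝ} {A : Ω → Prop} (h : ∀ ω, A ω → w ω = w' ω) :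
    Pr w A = Pr w' A :=
  sum_congr rfl fun ω _ => by split_ifs with hA; exacts [h ω hA, rfl]

theorem Pr_false (w : Ω → ℝ) : Pr w (fun _ => False) = 0 := by simp [Pr]

theorem Pr_eq_sum_fiber {α : Type*} (w : Ω → ℝ) (f : Ω → α) {s : Finset α}
    (hs : ∀ ω, f ω ∈ s) (A : Ω → Prop) :
    Pr w A = ∑ v ∈ s, Pr w (fun ω => f ω = v ∧ A ω) := by
  unfold Pr
  rw [← sum_fiberwise_of_maps_to fun ω _ => hs ω]
  refine sum_congr rfl fun v _ => ?_
  rw [sum_filter]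
  exact sum_congr rfl fun ω _ => by by_cases hv : f ω = v <;> simp [hv]

-- `Pr (p * g) A` is the restricted expectation `E[g; A]`.
theorem Pr_mul_eq_sum (p g : Ω → ℝ) (A : Ω → Prop) :
    Pr (p * g) A = ∑ y ∈ univ.image g, y * Pr p (fun ω => g ω = y ∧ A ω) := by
  rw [Pr_eq_sum_fiber _ g fun ω => mem_image_of_mem g (mem_univ ω)]
  refine sum_congr rfl fun y _ => ?_
  rw [Pr, Pr, mul_sum]
  refine sum_congr rfl fun ω _ => ?_
  split_ifs with h
  · rw [Pi.mul_apply, h.1, mul_comm]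
  · rw [mul_zero]

theorem Ex_ite_eq_Pr_mul (p g : Ω → ℝ) (A : Ω → Prop) [DecidablePred A] :
    Ex p (fun ω => if A ω then g ω else 0) = Pr (p * g) A :=
  sum_congr rfl fun ω _ => by by_cases hA : A ω <;> simp [hA]

variable {p : Ω → ℝ}

theorem Pr_nonneg (hp : ∀ ω, 0 ≤ p ω) (A : Ω → Prop) : 0 ≤ Pr p A :=
  sum_nonneg fun ω _ => by split_ifs; exacts [hp ω, le_rfl]

theorem Pr_mono (hp : ∀ ω, 0 ≤ p ω) {A B : Ω → Prop} (h : ∀ ω, A ω → B ω) :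
    Pr p A ≤ Pr p B :=
  sum_le_sum fun ω _ => by
    by_cases hA : A ω
    · simp [hA, h ω hA]
    · by_cases hB : B ω <;> simp [hA, hB, hp ω]

theorem Pr_eq_zero_of_imp (hp : ∀ ω, 0 ≤ p ω) {A B : Ω → Prop} (hB : Pr p B = 0)
    (h : ∀ ω, A ω → B ω) : Pr p A = 0 :=
  le_antisymm (hB ▸ Pr_mono hp h) (Pr_nonneg hp A)

end Pr

section CondIndep

variable {Ω : Type*} [Fintype Ω] {p : Ω → ℝ}

-- `A ⊥ B | C` in product form, which holds trivially when `P(C) = 0`.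
def CondIndepEvents (p : Ω → ℝ) (A B C : Ω → Prop) : Prop :=
  Pr p (fun ω => A ω ∧ B ω ∧ C ω) * Pr p C =
    Pr p (fun ω => A ω ∧ C ω) * Pr p (fun ω => B ω ∧ C ω)

namespace CondIndepEvents

variable {A B C E : Ω → Prop}

theorem congr {A' B' C' : Ω → Prop} (h : CondIndepEvents p A B C) (hA : ∀ ω, A ω ↔ A' ω)
    (hB : ∀ ω, B ω ↔ B' ω) (hC : ∀ ω, C ω ↔ C' ω) : CondIndepEvents p A' B' C' := by
  obtain rfl : A = A' := funext fun ω => propext (hA ω)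
  obtain rfl : B = B' := funext fun ω => propext (hB ω)
  obtain rfl : C = C' := funext fun ω => propext (hC ω)
  exact h

theorem symm (h : CondIndepEvents p A B C) : CondIndepEvents p B A C := by
  unfold CondIndepEvents at *
  rw [Pr_congr fun ω => and_left_comm, h, mul_comm]

theorem of_fiber {α : Type*} (f : Ω → α)
    (h : ∀ v, CondIndepEvents p (fun ω => f ω = v ∧ A ω) B C) : CondIndepEvents p A B C := by
  have hs : ∀ ω, f ω ∈ univ.image f := fun ω => mem_image_of_mem f (mem_univ ω)
  unfold CondIndepEvents
  rw [Pr_eq_sum_fiber p f hs, Pr_eq_sum_fiber p f hs (fun ω => A ω ∧ C ω), sum_mul, sum_mul]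
  exact sum_congr rfl fun v _ => by simpa only [CondIndepEvents, and_assoc] using h v

theorem of_fiber_right {α : Type*} (f : Ω → α)
    (h : ∀ v, CondIndepEvents p A (fun ω => f ω = v ∧ B ω) C) : CondIndepEvents p A B C :=
  (of_fiber f fun v => (h v).symm).symm

theorem weak_union (hp : ∀ ω, 0 ≤ p ω) (hABE : CondIndepEvents p (fun ω => A ω ∧ B ω) E C)
    (hBE : CondIndepEvents p B E C) : CondIndepEvents p A E (fun ω => B ω ∧ C ω) := by
  simp only [CondIndepEvents, and_assoc] at *
  have hAEBC :
      Pr p (fun ω => A ω ∧ E ω ∧ B ω ∧ C ω) = Pr p (fun ω => A ω ∧ B ω ∧ E ω ∧ C ω) :=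
    Pr_congr fun ω => and_congr_right' and_left_comm
  have hEBC : Pr p (fun ω => E ω ∧ B ω ∧ C ω) = Pr p (fun ω => B ω ∧ E ω ∧ C ω) :=
    Pr_congr fun ω => and_left_comm
  rw [hAEBC, hEBC]
  by_cases hC : Pr p C = 0
  · have hBC : Pr p (fun ω => B ω ∧ C ω) = 0 := Pr_eq_zero_of_imp hp hC fun ω h => h.2
    have hABC : Pr p (fun ω => A ω ∧ B ω ∧ C ω) = 0 :=
      Pr_eq_zero_of_imp hp hBC fun ω h => h.2
    rw [hBC, hABC, mul_zero, zero_mul]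
  · refine mul_right_cancel₀ hC ?_
    linear_combination Pr p (fun ω => B ω ∧ C ω) * hABE
      - Pr p (fun ω => A ω ∧ B ω ∧ C ω) * hBE

theorem contraction (hp : ∀ ω, 0 ≤ p ω) (hAB : CondIndepEvents p A B C)
    (hAE : CondIndepEvents p A E (fun ω => B ω ∧ C ω)) :
    CondIndepEvents p A (fun ω => E ω ∧ B ω) C := by
  simp only [CondIndepEvents, and_assoc] at *
  by_cases hBC : Pr p (fun ω => B ω ∧ C ω) = 0
  · have hEBC : Pr p (fun ω => E ω ∧ B ω ∧ C ω) = 0 :=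
      Pr_eq_zero_of_imp hp hBC fun ω h => h.2
    have hAEBC : Pr p (fun ω => A ω ∧ E ω ∧ B ω ∧ C ω) = 0 :=
      Pr_eq_zero_of_imp hp hEBC fun ω h => h.2
    rw [hEBC, hAEBC, zero_mul, mul_zero]
  · refine mul_right_cancel₀ hBC ?_
    linear_combination Pr p C * hAE + Pr p (fun ω => E ω ∧ B ω ∧ C ω) * hAB

theorem mean_eq {g : Ω → ℝ} (h : ∀ y, CondIndepEvents p (fun ω => g ω = y) B C) :
    Pr (p * g) (fun ω => B ω ∧ C ω) * Pr p C = Pr p (fun ω => B ω ∧ C ω) * Pr (p * g) C := by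
  rw [Pr_mul_eq_sum, Pr_mul_eq_sum, sum_mul, mul_sum]
  refine sum_congr rfl fun y _ => ?_
  have hy : _ = _ := h y
  linear_combination y * hy

end CondIndepEvents

end CondIndep

section Strata

variable {Ω : Type*} [Fintype Ω] {p : Ω → ℝ} {D1 D0 : Ω → Bool}

theorem Pr_defier (hmono : ∀ ω, p ω ≠ 0 → D0 ω ≤ D1 ω) (A E : Ω → Prop) :
    Pr p (fun ω => A ω ∧ D1 ω = false ∧ D0 ω = true ∧ E ω) = 0 := by
  rw [← Pr_false p]
  exact Pr_congr_ae fun ω hω => by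
    have := hmono ω hω
    revert this
    cases D1 ω <;> cases D0 ω <;> simp

theorem Pr_never_taker (hmono : ∀ ω, p ω ≠ 0 → D0 ω ≤ D1 ω) (A E : Ω → Prop) :
    Pr p (fun ω => A ω ∧ D1 ω = false ∧ D0 ω = false ∧ E ω) =
      Pr p (fun ω => A ω ∧ D1 ω = false ∧ E ω) :=
  Pr_congr_ae fun ω hω => by
    have := hmono ω hω
    revert this
    cases D1 ω <;> cases D0 ω <;> simp

theorem Pr_always_taker (hmono : ∀ ω, p ω ≠ 0 → D0 ω ≤ D1 ω) (A E : Ω → Prop) :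
    Pr p (fun ω => A ω ∧ D1 ω = true ∧ D0 ω = true ∧ E ω) =
      Pr p (fun ω => A ω ∧ D0 ω = true ∧ E ω) :=
  Pr_congr_ae fun ω hω => by
    have := hmono ω hω
    revert this
    cases D1 ω <;> cases D0 ω <;> simp

theorem Pr_complier (hmono : ∀ ω, p ω ≠ 0 → D0 ω ≤ D1 ω) (A E : Ω → Prop) :
    Pr p (fun ω => A ω ∧ D1 ω = true ∧ D0 ω = false ∧ E ω) =
      Pr p (fun ω => A ω ∧ D0 ω = false ∧ E ω) -
        Pr p (fun ω => A ω ∧ D1 ω = false ∧ E ω) := by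
  rw [eq_sub_iff_add_eq, ← Pr_never_taker hmono, Pr, Pr, Pr, ← sum_add_distrib]
  refine sum_congr rfl fun ω _ => ?_
  cases D1 ω <;> cases D0 ω <;> simp

theorem CondIndepEvents.of_strata (hmono : ∀ ω, p ω ≠ 0 → D0 ω ≤ D1 ω) {A B C : Ω → Prop}
    (h1 : ∀ d, CondIndepEvents p (fun ω => A ω ∧ D1 ω = d) B C)
    (h0 : ∀ d, CondIndepEvents p (fun ω => A ω ∧ D0 ω = d) B C) (u1 u0 : Bool) :
    CondIndepEvents p (fun ω => A ω ∧ D1 ω = u1 ∧ D0 ω = u0) B C := by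
  simp only [CondIndepEvents, and_assoc] at *
  cases u1 <;> cases u0
  · rw [Pr_never_taker hmono, Pr_never_taker hmono]; exact h1 false
  · rw [Pr_defier hmono, Pr_defier hmono, zero_mul, zero_mul]
  · rw [Pr_complier hmono, Pr_complier hmono]
    linear_combination h0 false - h1 false
  · rw [Pr_always_taker hmono, Pr_always_taker hmono]; exact h0 true

theorem CondIndepEvents.of_strata_right {A B C : Ω → Prop} (t d : Bool)
    (h : ∀ u1 u0, CondIndepEvents p A (fun ω => B ω ∧ D1 ω = u1 ∧ D0 ω = u0) C) :
    CondIndepEvents p A (fun ω => B ω ∧ (if t then D1 ω else D0 ω) = d) C :=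
  of_fiber_right (fun ω => if t then D0 ω else D1 ω) fun c =>
    (h (if t then d else c) (if t then c else d)).congr (fun _ => Iff.rfl)
      (fun ω => by cases t <;> simp <;> tauto) fun _ => Iff.rfl

theorem CondIndepEvents.and_strata (hp : ∀ ω, 0 ≤ p ω) (hmono : ∀ ω, p ω ≠ 0 → D0 ω ≤ D1 ω)
    {α : Type*} {g : Ω → α} {B C : Ω → Prop}
    (hB : ∀ v (t d : Bool),
      CondIndepEvents p (fun ω => g ω = v ∧ (if t then D1 ω else D0 ω) = d) B C)
    (hU : ∀ v u1 u0,
      CondIndepEvents p (fun ω => g ω = v) (fun ω => D1 ω = u1 ∧ D0 ω = u0) C)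
    (v : α) (u1 u0 : Bool) :
    CondIndepEvents p (fun ω => g ω = v) (fun ω => B ω ∧ D1 ω = u1 ∧ D0 ω = u0) C := by
  have hgU : ∀ v, CondIndepEvents p (fun ω => g ω = v ∧ D1 ω = u1 ∧ D0 ω = u0) B C :=
    fun v => of_strata hmono (hB v true) (hB v false) u1 u0
  exact (hU v u1 u0).contraction hp ((hgU v).weak_union hp (of_fiber g hgU))

end Strata

section Model

variable {Ω 𝒳 ℳ : Type*} [Fintype Ω]

-- Assumptions (ii)–(iv), one conditional independence per value of the variables involved.
def TreatmentIgnorability (p : Ω → ℝ) (Z D1 D0 : Ω → Bool) (X : Ω → 𝒳)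
    (Mpot : Bool → Bool → Ω → ℳ) (Ypot : Bool → Bool → ℳ → Ω → ℝ) : Prop :=
  ∀ (t z' zs d' : Bool) (ms : ℳ) (dv : Bool) (mv : ℳ) (yv : ℝ) (zv : Bool) (x : 𝒳),
    CondIndepEvents p
      (fun ω => (if t then D1 ω else D0 ω) = dv ∧ Mpot z' d' ω = mv ∧ Ypot zs d' ms ω = yv)
      (fun ω => Z ω = zv) (fun ω => X ω = x)

def PrincipalIgnorability (p : Ω → ℝ) (D1 D0 : Ω → Bool) (X : Ω → 𝒳)
    (Mpot : Bool → Bool → Ω → ℳ) (Ypot : Bool → Bool → ℳ → Ω → ℝ) : Prop :=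
  ∀ (z z' d : Bool) (m' mv : ℳ) (yv : ℝ) (u1 u0 : Bool) (x : 𝒳),
    CondIndepEvents p (fun ω => Mpot z d ω = mv ∧ Ypot z' d m' ω = yv)
      (fun ω => D1 ω = u1 ∧ D0 ω = u0) (fun ω => X ω = x)

def MediatorIgnorability (p : Ω → ℝ) (Z D1 D0 : Ω → Bool) (X : Ω → 𝒳)
    (Mpot : Bool → Bool → Ω → ℳ) (Ypot : Bool → Bool → ℳ → Ω → ℝ) : Prop :=
  ∀ (z z' d d' : Bool) (m' mv : ℳ) (yv : ℝ) (zv u1 u0 : Bool) (x : 𝒳),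
    CondIndepEvents p (fun ω => Mpot z d ω = mv) (fun ω => Ypot z' d' m' ω = yv)
      (fun ω => Z ω = zv ∧ D1 ω = u1 ∧ D0 ω = u0 ∧ X ω = x)

variable {p : Ω → ℝ} {Z D1 D0 : Ω → Bool} {X : Ω → 𝒳} {Mpot : Bool → Bool → Ω → ℳ}
  {Ypot : Bool → Bool → ℳ → Ω → ℝ}

theorem condIndep_mediator_stratum (hpi : PrincipalIgnorability p D1 D0 X Mpot Ypot)
    (zq dq : Bool) (mv : ℳ) (u1 u0 : Bool) (x : 𝒳) :
    CondIndepEvents p (fun ω => Mpot zq dq ω = mv) (fun ω => D1 ω = u1 ∧ D0 ω = u0)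
      (fun ω => X ω = x) :=
  .of_fiber (Ypot zq dq mv) fun y =>
    (hpi zq zq dq mv mv y u1 u0 x).congr (fun _ => and_comm) (fun _ => Iff.rfl)
      fun _ => Iff.rfl

theorem condIndep_mediator_treatment (hp : ∀ ω, 0 ≤ p ω)
    (hmono : ∀ ω, p ω ≠ 0 → D0 ω ≤ D1 ω)
    (hig : TreatmentIgnorability p Z D1 D0 X Mpot Ypot)
    (hpi : PrincipalIgnorability p D1 D0 X Mpot Ypot) (zq dq : Bool) (mv : ℳ) (zv t d : Bool)
    (x : 𝒳) :
    CondIndepEvents p (fun ω => Mpot zq dq ω = mv)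
      (fun ω => Z ω = zv ∧ (if t then D1 ω else D0 ω) = d) (fun ω => X ω = x) :=
  .of_strata_right t d fun u1 u0 =>
    CondIndepEvents.and_strata hp hmono
      (fun mv t d => .of_fiber (Ypot zq dq mv) fun y =>
        (hig t zq zq dq mv d mv y zv x).congr (fun ω => by tauto) (fun _ => Iff.rfl)
          fun _ => Iff.rfl)
      (fun mv u1 u0 => condIndep_mediator_stratum hpi zq dq mv u1 u0 x) mv u1 u0

theorem condIndep_outcome_mediator_treatment_stratum (hp : ∀ ω, 0 ≤ p ω)
    (hmono : ∀ ω, p ω ≠ 0 → D0 ω ≤ D1 ω) (hig : TreatmentIgnorability p Z D1 D0 X Mpot Ypot)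
    (hpi : PrincipalIgnorability p D1 D0 X Mpot Ypot)
    (hmi : MediatorIgnorability p Z D1 D0 X Mpot Ypot) (z a : Bool) (m : ℳ) (y : ℝ)
    (zq dq : Bool) (mv : ℳ) (zv u1 u0 : Bool) (x : 𝒳) :
    CondIndepEvents p (fun ω => Ypot z a m ω = y)
      (fun ω => Mpot zq dq ω = mv ∧ Z ω = zv ∧ D1 ω = u1 ∧ D0 ω = u0) (fun ω => X ω = x) :=
  have hZU : CondIndepEvents p (fun ω => Ypot z a m ω = y)
      (fun ω => Z ω = zv ∧ D1 ω = u1 ∧ D0 ω = u0) (fun ω => X ω = x) :=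
    CondIndepEvents.and_strata hp hmono
      (fun y t d => .of_fiber (Mpot z a) fun mv =>
        (hig t z z a m d mv y zv x).congr (fun ω => by tauto) (fun _ => Iff.rfl)
          fun _ => Iff.rfl)
      (fun y u1 u0 => .of_fiber (Mpot z a) fun mv => hpi z z a m mv y u1 u0 x)
      y u1 u0
  hZU.contraction hp <| (hmi zq z dq a m mv y zv u1 u0 x).symm.congr (fun _ => Iff.rfl)
    (fun _ => Iff.rfl) fun ω => by tauto

end Model

section Observed

variable {Ω 𝒳 ℳ : Type*} {p : Ω → ℝ} {Z D1 D0 : Ω → Bool}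
  {X : Ω → 𝒳} {Mpot : Bool → Bool → Ω → ℳ} {Ypot : Bool → Bool → ℳ → Ω → ℝ} {D : Ω → Bool}
  {M : Ω → ℳ} {Y : Ω → ℝ}

theorem treated_iff (hD : ∀ ω, D ω = if Z ω then D1 ω else D0 ω) (ω : Ω) (z d : Bool) :
    (Z ω = z ∧ D ω = d) ↔ (Z ω = z ∧ (if z then D1 ω else D0 ω) = d) :=
  and_congr_right fun hz => by rw [hD ω, hz]

theorem observed_iff (hD : ∀ ω, D ω = if Z ω then D1 ω else D0 ω)
    (hM : ∀ ω, M ω = Mpot (Z ω) (D ω) ω) (ω : Ω) (z d : Bool) (m : ℳ) :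
    (Z ω = z ∧ D ω = d ∧ M ω = m) ↔
      (Z ω = z ∧ (if z then D1 ω else D0 ω) = d ∧ Mpot z d ω = m) := by
  rw [← and_assoc, treated_iff hD, and_assoc]
  exact and_congr_right fun hz => and_congr_right fun hd => by rw [hM ω, hz, hD ω, hz, hd]

variable [Fintype Ω]

theorem outcome_regression_eq (hp : ∀ ω, 0 ≤ p ω) (hmono : ∀ ω, p ω ≠ 0 → D0 ω ≤ D1 ω)
    (hig : TreatmentIgnorability p Z D1 D0 X Mpot Ypot)
    (hpi : PrincipalIgnorability p D1 D0 X Mpot Ypot)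
    (hmi : MediatorIgnorability p Z D1 D0 X Mpot Ypot)
    (hD : ∀ ω, D ω = if Z ω then D1 ω else D0 ω) (hM : ∀ ω, M ω = Mpot (Z ω) (D ω) ω)
    (hY : ∀ ω, Y ω = Ypot (Z ω) (D ω) (M ω) ω) {z a : Bool} {m : ℳ} {x : 𝒳}
    (hX : Pr p (fun ω => X ω = x) ≠ 0)
    (hcell : Pr p (fun ω => Z ω = z ∧ D ω = a ∧ M ω = m ∧ X ω = x) ≠ 0) :
    Ex p (fun ω => if Z ω = z ∧ D ω = a ∧ M ω = m ∧ X ω = x then Y ω else 0) /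
        Pr p (fun ω => Z ω = z ∧ D ω = a ∧ M ω = m ∧ X ω = x) =
      Pr (p * Ypot z a m) (fun ω => X ω = x) / Pr p (fun ω => X ω = x) := by
  have hcell_iff : ∀ ω, (Z ω = z ∧ D ω = a ∧ M ω = m ∧ X ω = x) ↔
      ((Mpot z a ω = m ∧ Z ω = z) ∧ (if z then D1 ω else D0 ω) = a) ∧ X ω = x := fun ω => by
    have := observed_iff hD hM ω z a m
    tauto
  have hYcell : ∀ ω, Z ω = z ∧ D ω = a ∧ M ω = m ∧ X ω = x →
      (p * Y) ω = (p * Ypot z a m) ω := fun ω ⟨hz, hd, hm, _⟩ => by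
    rw [Pi.mul_apply, hY ω, hz, hd, hm, Pi.mul_apply]
  rw [div_eq_div_iff hcell hX, Ex_ite_eq_Pr_mul, Pr_congr_weight hYcell, Pr_congr hcell_iff,
    Pr_congr hcell_iff]
  refine (CondIndepEvents.mean_eq fun y => .of_strata_right z a fun u1 u0 => ?_).trans
    (mul_comm _ _)
  exact (condIndep_outcome_mediator_treatment_stratum hp hmono hig hpi hmi z a m y z a m z u1 u0
    x).congr (fun _ => Iff.rfl) (fun _ => and_assoc.symm) fun _ => Iff.rfl

theorem mediator_prob_eq (hp : ∀ ω, 0 ≤ p ω) (hmono : ∀ ω, p ω ≠ 0 → D0 ω ≤ D1 ω)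
    (hig : TreatmentIgnorability p Z D1 D0 X Mpot Ypot)
    (hpi : PrincipalIgnorability p D1 D0 X Mpot Ypot)
    (hD : ∀ ω, D ω = if Z ω then D1 ω else D0 ω) (hM : ∀ ω, M ω = Mpot (Z ω) (D ω) ω)
    {z b : Bool} {m : ℳ} {x : 𝒳} (hX : Pr p (fun ω => X ω = x) ≠ 0)
    (hZD : Pr p (fun ω => Z ω = z ∧ D ω = b ∧ X ω = x) ≠ 0) :
    Pr p (fun ω => M ω = m ∧ Z ω = z ∧ D ω = b ∧ X ω = x) /
        Pr p (fun ω => Z ω = z ∧ D ω = b ∧ X ω = x) =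
      Pr p (fun ω => Mpot z b ω = m ∧ X ω = x) / Pr p (fun ω => X ω = x) := by
  have hmed : ∀ ω, (M ω = m ∧ Z ω = z ∧ D ω = b ∧ X ω = x) ↔
      Mpot z b ω = m ∧ (Z ω = z ∧ (if z then D1 ω else D0 ω) = b) ∧ X ω = x := fun ω => by
    have := observed_iff hD hM ω z b m
    tauto
  have htreated : ∀ ω, (Z ω = z ∧ D ω = b ∧ X ω = x) ↔
      (Z ω = z ∧ (if z then D1 ω else D0 ω) = b) ∧ X ω = x := fun ω => by
    rw [← and_assoc, treated_iff hD]
  rw [div_eq_div_iff hZD hX, Pr_congr hmed, Pr_congr htreated]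
  exact condIndep_mediator_treatment hp hmono hig hpi z b m z z b x

end Observed

section CrossWorld

variable {Ω 𝒳 ℳ : Type*} [Fintype Ω] {p : Ω → ℝ} {Z D1 D0 : Ω → Bool}
  {X : Ω → 𝒳} {Mpot : Bool → Bool → Ω → ℳ} {Ypot : Bool → Bool → ℳ → Ω → ℝ}

theorem crossWorld_term_eq (hp : ∀ ω, 0 ≤ p ω) (hmono : ∀ ω, p ω ≠ 0 → D0 ω ≤ D1 ω)
    (hig : TreatmentIgnorability p Z D1 D0 X Mpot Ypot)
    (hpi : PrincipalIgnorability p D1 D0 X Mpot Ypot)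
    (hmi : MediatorIgnorability p Z D1 D0 X Mpot Ypot) {z a z' b u1 u0 : Bool} {m : ℳ}
    {x : 𝒳} (hX : Pr p (fun ω => X ω = x) ≠ 0) :
    Pr (p * Ypot z a m) (fun ω => Mpot z' b ω = m ∧ D1 ω = u1 ∧ D0 ω = u0 ∧ X ω = x) =
      Pr (p * Ypot z a m) (fun ω => X ω = x) / Pr p (fun ω => X ω = x) *
        (Pr p (fun ω => Mpot z' b ω = m ∧ X ω = x) / Pr p (fun ω => X ω = x)) *
        Pr p (fun ω => D1 ω = u1 ∧ D0 ω = u0 ∧ X ω = x) := by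
  have hY :
      Pr (p * Ypot z a m) (fun ω => Mpot z' b ω = m ∧ D1 ω = u1 ∧ D0 ω = u0 ∧ X ω = x) *
        Pr p (fun ω => X ω = x) =
      Pr p (fun ω => Mpot z' b ω = m ∧ D1 ω = u1 ∧ D0 ω = u0 ∧ X ω = x) *
        Pr (p * Ypot z a m) (fun ω => X ω = x) := by
    have := CondIndepEvents.mean_eq (B := fun ω => Mpot z' b ω = m ∧ D1 ω = u1 ∧ D0 ω = u0)
      fun y => .of_fiber_right Z fun zv =>
        (condIndep_outcome_mediator_treatment_stratum hp hmono hig hpi hmi z a m y z' b m zv u1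
          u0 x).congr (fun _ => Iff.rfl) (fun _ => by tauto) fun _ => Iff.rfl
    simpa only [and_assoc] using this
  have hM : Pr p (fun ω => Mpot z' b ω = m ∧ D1 ω = u1 ∧ D0 ω = u0 ∧ X ω = x) *
      Pr p (fun ω => X ω = x) =
      Pr p (fun ω => Mpot z' b ω = m ∧ X ω = x) *
        Pr p (fun ω => D1 ω = u1 ∧ D0 ω = u0 ∧ X ω = x) := by
    simpa only [CondIndepEvents, and_assoc] using condIndep_mediator_stratum hpi z' b m u1 u0 x
  field_simp
  linear_combination
    Pr p (fun ω => X ω = x) * hY + Pr (p * Ypot z a m) (fun ω => X ω = x) * hM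

theorem Ex_crossWorld_eq_sum [Fintype 𝒳] [Fintype ℳ] (z z' d1 d0 : Bool) :
    Ex p (fun ω => if D1 ω = d1 ∧ D0 ω = d0 then
        Ypot z (if z then D1 ω else D0 ω) (Mpot z' (if z' then D1 ω else D0 ω) ω) ω else 0) =
      ∑ x, ∑ m, Pr (p * Ypot z (if z then d1 else d0) m) (fun ω =>
        Mpot z' (if z' then d1 else d0) ω = m ∧ D1 ω = d1 ∧ D0 ω = d0 ∧ X ω = x) := by
  rw [Ex_ite_eq_Pr_mul, Pr_eq_sum_fiber _ X fun _ => mem_univ _]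
  refine sum_congr rfl fun x _ => ?_
  rw [Pr_eq_sum_fiber _ (Mpot z' (if z' then d1 else d0)) fun _ => mem_univ _]
  refine sum_congr rfl fun m _ => ?_
  refine (Pr_congr_weight ?_).trans (Pr_congr fun ω => by tauto)
  rintro ω ⟨hm, -, rfl, rfl⟩
  simp only [Pi.mul_apply, hm]

end CrossWorld

theorem crossworld_mean_identification_general
    {Ω 𝒳 ℳ : Type*} [Fintype Ω] [Fintype 𝒳] [Fintype ℳ]
    (p : Ω → ℝ) (hp : ∀ ω, 0 ≤ p ω)
    (Z D1 D0 : Ω → Bool) (X : Ω → 𝒳)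
    (Mpot : Bool → Bool → Ω → ℳ) (Ypot : Bool → Bool → ℳ → Ω → ℝ)
    (D : Ω → Bool) (M : Ω → ℳ) (Y : Ω → ℝ)
    -- (i) consistency
    (hD : ∀ ω, D ω = if Z ω then D1 ω else D0 ω)
    (hM : ∀ ω, M ω = Mpot (Z ω) (D ω) ω)
    (hY : ∀ ω, Y ω = Ypot (Z ω) (D ω) (M ω) ω)
    -- standard monotonicity: D1 ≥ D0 almost surely
    (hmono : ∀ ω, 0 < p ω → D0 ω ≤ D1 ω)
    -- (ii) ignorability of the treatment assignment:
    -- (D_z, M_{z'd'}, Y_{zsd'ms}) ⊥ Z | X for all indices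
    (hig : ∀ (z z' zs d' : Bool) (ms : ℳ) (dv : Bool) (mv : ℳ) (yv : ℝ)
        (zv : Bool) (x : 𝒳),
      Pr p (fun ω => (if z then D1 ω else D0 ω) = dv ∧ Mpot z' d' ω = mv ∧
            Ypot zs d' ms ω = yv ∧ Z ω = zv ∧ X ω = x) *
          Pr p (fun ω => X ω = x) =
        Pr p (fun ω => (if z then D1 ω else D0 ω) = dv ∧ Mpot z' d' ω = mv ∧
            Ypot zs d' ms ω = yv ∧ X ω = x) *
          Pr p (fun ω => Z ω = zv ∧ X ω = x))
    -- (iii) generalized principal ignorability: (M_{zd}, Y_{z'dm'}) ⊥ U | X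
    (hpi : ∀ (z z' d : Bool) (m' : ℳ) (mv : ℳ) (yv : ℝ) (u1 u0 : Bool) (x : 𝒳),
      Pr p (fun ω => Mpot z d ω = mv ∧ Ypot z' d m' ω = yv ∧
            D1 ω = u1 ∧ D0 ω = u0 ∧ X ω = x) *
          Pr p (fun ω => X ω = x) =
        Pr p (fun ω => Mpot z d ω = mv ∧ Ypot z' d m' ω = yv ∧ X ω = x) *
          Pr p (fun ω => D1 ω = u1 ∧ D0 ω = u0 ∧ X ω = x))
    -- (iv) ignorability of the mediator: M_{zd} ⊥ Y_{z'd'm'} | (Z, U, X)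
    (hmi : ∀ (z z' d d' : Bool) (m' : ℳ) (mv : ℳ) (yv : ℝ)
        (zv u1 u0 : Bool) (x : 𝒳),
      Pr p (fun ω => Mpot z d ω = mv ∧ Ypot z' d' m' ω = yv ∧
            Z ω = zv ∧ D1 ω = u1 ∧ D0 ω = u0 ∧ X ω = x) *
          Pr p (fun ω => Z ω = zv ∧ D1 ω = u1 ∧ D0 ω = u0 ∧ X ω = x) =
        Pr p (fun ω => Mpot z d ω = mv ∧
            Z ω = zv ∧ D1 ω = u1 ∧ D0 ω = u0 ∧ X ω = x) *
          Pr p (fun ω => Ypot z' d' m' ω = yv ∧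
            Z ω = zv ∧ D1 ω = u1 ∧ D0 ω = u0 ∧ X ω = x))
    -- (v) positivity of all conditioning events
    (hposX : ∀ x, 0 < Pr p (fun ω => X ω = x))
    (hposcell : ∀ (zv dv : Bool) (mv : ℳ) (x : 𝒳),
      0 < Pr p (fun ω => Z ω = zv ∧ D ω = dv ∧ M ω = mv ∧ X ω = x))
    (z z' d1 d0 : Bool)
    (hU : 0 < Pr p (fun ω => D1 ω = d1 ∧ D0 ω = d0)) :
    -- E[Y_{z M_{z'}} | U = (d1, d0)]
    Ex p (fun ω =>
        if D1 ω = d1 ∧ D0 ω = d0 then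
          Ypot z (if z then D1 ω else D0 ω)
            (Mpot z' (if z' then D1 ω else D0 ω) ω) ω
        else 0) /
        Pr p (fun ω => D1 ω = d1 ∧ D0 ω = d0) =
      ∑ x,
        (Pr p (fun ω => D1 ω = d1 ∧ D0 ω = d0 ∧ X ω = x) /
            Pr p (fun ω => X ω = x) /
          Pr p (fun ω => D1 ω = d1 ∧ D0 ω = d0)) *
        (∑ m,
          (Ex p (fun ω =>
              if Z ω = z ∧ D ω = (if z then d1 else d0) ∧ M ω = m ∧ X ω = x
              then Y ω else 0) /
            Pr p (fun ω =>
              Z ω = z ∧ D ω = (if z then d1 else d0) ∧ M ω = m ∧ X ω = x)) *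
          (Pr p (fun ω =>
              M ω = m ∧ Z ω = z' ∧ D ω = (if z' then d1 else d0) ∧ X ω = x) /
            Pr p (fun ω =>
              Z ω = z' ∧ D ω = (if z' then d1 else d0) ∧ X ω = x))) *
        Pr p (fun ω => X ω = x) := by
  have hmono' : ∀ ω, p ω ≠ 0 → D0 ω ≤ D1 ω := fun ω h => hmono ω ((hp ω).lt_of_ne' h)
  have hig' : TreatmentIgnorability p Z D1 D0 X Mpot Ypot :=
    fun t z' zs d' ms dv mv yv zv x => by
      simpa only [CondIndepEvents, and_assoc] using hig t z' zs d' ms dv mv yv zv x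
  have hpi' : PrincipalIgnorability p D1 D0 X Mpot Ypot :=
    fun z z' d m' mv yv u1 u0 x => by
      simpa only [CondIndepEvents, and_assoc] using hpi z z' d m' mv yv u1 u0 x
  rw [Ex_crossWorld_eq_sum (X := X), sum_div]
  refine sum_congr rfl fun x _ => ?_
  have hX := (hposX x).ne'
  have hmed := fun m => mediator_prob_eq hp hmono' hig' hpi' hD hM (z := z')
    (b := if z' then d1 else d0) (m := m) hX
    ((hposcell _ _ m x).trans_le (Pr_mono hp fun ω h => ⟨h.1, h.2.1, h.2.2.2⟩)).ne'
  simp_rw [outcome_regression_eq hp hmono' hig' hpi' hmi hD hM hY hX (hposcell _ _ _ x).ne',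
    hmed, crossWorld_term_eq hp hmono' hig' hpi' hmi hX, ← sum_mul]
  field_simp

/-- Nonparametric identification of the cross-world mean in the
discrete case (Theorem 1 of the paper).  Potential values: `D1, D0` are the binary
potential post-treatment events, `Mpot z d ω = M_{zd}(ω)` are the potential
mediators, `Ypot z d m ω = Y_{zdm}(ω)` are the potential outcomes.  Under
consistency, standard monotonicity, ignorability of treatment, generalized
principal ignorability, ignorability of the mediator, and positivity, for any
treatment levels `z, z'` and stratum `u = (d1, d0)` with `P(U=u) > 0`,
`E[Y_{z M_{z'}} | U = u]
 = Σ_x (P(U=u | X=x) / P(U=u)) · Σ_m E[Y | Z=z, D=d_z, M=m, X=x]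
     · P(M=m | Z=z', D=d_{z'}, X=x) · P(X=x)`,
where `d_z = d1` if `z = 1` and `d_z = d0` if `z = 0`. -/
theorem crossworld_mean_identification
    {Ω 𝒳 ℳ : Type*} [Fintype Ω] [Fintype 𝒳] [Fintype ℳ]
    (p : Ω → ℝ) (hp : ∀ ω, 0 ≤ p ω) (hpsum : ∑ ω, p ω = 1)
    (Z D1 D0 : Ω → Bool) (X : Ω → 𝒳)
    (Mpot : Bool → Bool → Ω → ℳ) (Ypot : Bool → Bool → ℳ → Ω → ℝ)
    (D : Ω → Bool) (M : Ω → ℳ) (Y : Ω → ℝ)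
    -- (i) consistency
    (hD : ∀ ω, D ω = if Z ω then D1 ω else D0 ω)
    (hM : ∀ ω, M ω = Mpot (Z ω) (D ω) ω)
    (hY : ∀ ω, Y ω = Ypot (Z ω) (D ω) (M ω) ω)
    -- standard monotonicity: D1 ≥ D0 almost surely
    (hmono : ∀ ω, 0 < p ω → D0 ω ≤ D1 ω)
    -- (ii) ignorability of the treatment assignment:
    -- (D_z, M_{z'd'}, Y_{zsd'ms}) ⊥ Z | X for all indices
    (hig : ∀ (z z' zs d' : Bool) (ms : ℳ) (dv : Bool) (mv : ℳ) (yv : ℝ)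
        (zv : Bool) (x : 𝒳),
      Pr p (fun ω => (if z then D1 ω else D0 ω) = dv ∧ Mpot z' d' ω = mv ∧
            Ypot zs d' ms ω = yv ∧ Z ω = zv ∧ X ω = x) *
          Pr p (fun ω => X ω = x) =
        Pr p (fun ω => (if z then D1 ω else D0 ω) = dv ∧ Mpot z' d' ω = mv ∧
            Ypot zs d' ms ω = yv ∧ X ω = x) *
          Pr p (fun ω => Z ω = zv ∧ X ω = x))
    -- (iii) generalized principal ignorability: (M_{zd}, Y_{z'dm'}) ⊥ U | X
    (hpi : ∀ (z z' d : Bool) (m' : ℳ) (mv : ℳ) (yv : ℝ) (u1 u0 : Bool) (x : 𝒳),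
      Pr p (fun ω => Mpot z d ω = mv ∧ Ypot z' d m' ω = yv ∧
            D1 ω = u1 ∧ D0 ω = u0 ∧ X ω = x) *
          Pr p (fun ω => X ω = x) =
        Pr p (fun ω => Mpot z d ω = mv ∧ Ypot z' d m' ω = yv ∧ X ω = x) *
          Pr p (fun ω => D1 ω = u1 ∧ D0 ω = u0 ∧ X ω = x))
    -- (iv) ignorability of the mediator: M_{zd} ⊥ Y_{z'd'm'} | (Z, U, X)
    (hmi : ∀ (z z' d d' : Bool) (m' : ℳ) (mv : ℳ) (yv : ℝ)
        (zv u1 u0 : Bool) (x : 𝒳),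
      Pr p (fun ω => Mpot z d ω = mv ∧ Ypot z' d' m' ω = yv ∧
            Z ω = zv ∧ D1 ω = u1 ∧ D0 ω = u0 ∧ X ω = x) *
          Pr p (fun ω => Z ω = zv ∧ D1 ω = u1 ∧ D0 ω = u0 ∧ X ω = x) =
        Pr p (fun ω => Mpot z d ω = mv ∧
            Z ω = zv ∧ D1 ω = u1 ∧ D0 ω = u0 ∧ X ω = x) *
          Pr p (fun ω => Ypot z' d' m' ω = yv ∧
            Z ω = zv ∧ D1 ω = u1 ∧ D0 ω = u0 ∧ X ω = x))
    -- (v) positivity of all conditioning events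
    (hposX : ∀ x, 0 < Pr p (fun ω => X ω = x))
    (hposcell : ∀ (zv dv : Bool) (mv : ℳ) (x : 𝒳),
      0 < Pr p (fun ω => Z ω = zv ∧ D ω = dv ∧ M ω = mv ∧ X ω = x))
    (z z' d1 d0 : Bool)
    (hU : 0 < Pr p (fun ω => D1 ω = d1 ∧ D0 ω = d0)) :
    -- E[Y_{z M_{z'}} | U = (d1, d0)]
    Ex p (fun ω =>
        if D1 ω = d1 ∧ D0 ω = d0 then
          Ypot z (if z then D1 ω else D0 ω)
            (Mpot z' (if z' then D1 ω else D0 ω) ω) ω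
        else 0) /
        Pr p (fun ω => D1 ω = d1 ∧ D0 ω = d0) =
      ∑ x,
        (Pr p (fun ω => D1 ω = d1 ∧ D0 ω = d0 ∧ X ω = x) /
            Pr p (fun ω => X ω = x) /
          Pr p (fun ω => D1 ω = d1 ∧ D0 ω = d0)) *
        (∑ m,
          (Ex p (fun ω =>
              if Z ω = z ∧ D ω = (if z then d1 else d0) ∧ M ω = m ∧ X ω = x
              then Y ω else 0) /
            Pr p (fun ω =>
              Z ω = z ∧ D ω = (if z then d1 else d0) ∧ M ω = m ∧ X ω = x)) *
          (Pr p (fun ω =>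
              M ω = m ∧ Z ω = z' ∧ D ω = (if z' then d1 else d0) ∧ X ω = x) /
            Pr p (fun ω =>
              Z ω = z' ∧ D ω = (if z' then d1 else d0) ∧ X ω = x))) *
        Pr p (fun ω => X ω = x) :=
  crossworld_mean_identification_general p hp Z D1 D0 X Mpot Ypot D M Y hD hM hY hmono hig hpi hmi
    hposX hposcell z z' d1 d0 hU
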